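/- Let G be a 2-connected multigraph with spanning tree T, Y ⊆ E(G)∖T non-empty, and (E1,E2) a 2-separation with separating vertices u,w such that P_{u,w}(T) ⊆ E1 and Y ∩ E1 = ∅. Let G' be the subgraph on E2 augmented by a new edge e = {u,w}, with spanning tree T' := (T ∩ E2) ∪ {e}. Then a vertex v ∈ V(E2) is Y-splittable with respect to G if and only if v is Y-splittable with respect to G'. -/

import Mathlib

/-- A multigraph on vertex type `V` with edge type `E`: each edge has an
unordered pair of endpoints. -/
structure Multigraph (V E : Type) where
  ends : E → Sym2 V

namespace Multigraph

variable {V E : Type}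

/-- Adjacency within the subgraph with edge set `F` and vertex set `S`. -/
def Adj (G : Multigraph V E) (F : Set E) (S : Set V) (a b : V) : Prop :=
  a ∈ S ∧ b ∈ S ∧ ∃ e ∈ F, G.ends e = s(a, b)

/-- Reachability (lying in the same connected component) in the subgraph with
edge set `F` and vertex set `S`. -/
def Reach (G : Multigraph V E) (F : Set E) (S : Set V) : V → V → Prop :=
  Relation.ReflTransGen (G.Adj F S)

/-- `v` is `Y`-splittable: the auxiliary graph `H^v_Y`, whose vertices are the
connected components of `G` minus the edges `Y` and the vertex `v`, with edges
induced by `Y`-edges between components (loops for `Y`-edges within a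
component), is bipartite.  This is expressed by a 2-colouring of the vertices
which is constant on the components of `G^v_Y` and proper on `Y`-edges not
incident to `v`. -/
def Splittable (G : Multigraph V E) (Y : Set E) (v : V) : Prop :=
  ∃ c : V → Bool,
    (∀ a b : V, G.Reach (Set.univ \ Y) {v}ᶜ a b → c a = c b) ∧
    (∀ y ∈ Y, ∀ a b : V, G.ends y = s(a, b) → a ≠ v → b ≠ v → c a ≠ c b)

/-- `T` is a spanning tree of `G`: the subgraph `(V, T)` is connected and
every edge of `T` is a bridge of it. -/
def IsSpanningTree (G : Multigraph V E) (T : Set E) : Prop :=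
  (∀ a b : V, G.Reach T Set.univ a b) ∧
  ∀ f ∈ T, ∃ a b : V, ¬ G.Reach (T \ {f}) Set.univ a b

/-- The set of tree edges lying on the tree path `P_{u,w}(T)` between `u` and
`w`: a tree edge lies on this path iff deleting it separates `u` from `w`. -/
def pathEdges (G : Multigraph V E) (T : Set E) (u w : V) : Set E :=
  {f | f ∈ T ∧ ¬ G.Reach (T \ {f}) Set.univ u w}

/-- The fundamental path `P_e(T)` of an edge `e` (as a set of tree edges). -/
def fundPath (G : Multigraph V E) (T : Set E) (e : E) : Set E :=
  {f | f ∈ T ∧ ∀ a b : V, G.ends e = s(a, b) → ¬ G.Reach (T \ {f}) Set.univ a b}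

/-- `v` lies on the tree path between `u` and `w`. -/
def OnPath (G : Multigraph V E) (T : Set E) (u w v : V) : Prop :=
  v = u ∨ v = w ∨ ¬ G.Reach T {v}ᶜ u w

/-- `v` lies on the fundamental path `P_e(T)` of the edge `e`. -/
def OnFundPath (G : Multigraph V E) (T : Set E) (e : E) (v : V) : Prop :=
  ∀ a b : V, G.ends e = s(a, b) → G.OnPath T a b v

/-- The vertices covered by an edge set `F`. -/
def verts (G : Multigraph V E) (F : Set E) : Set V :=
  {v | ∃ e ∈ F, v ∈ G.ends e}

/-- `P⁻¹_{u,w}(G,T)`: the non-tree edges whose fundamental path contains the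
tree path from `u` to `w`. -/
def Pinv (G : Multigraph V E) (T : Set E) (u w : V) : Set E :=
  {e | e ∉ T ∧ G.pathEdges T u w ⊆ G.fundPath T e}

/-- A multigraph is simple if it has no loops and no parallel edges. -/
def Simple (G : Multigraph V E) : Prop :=
  (∀ e : E, ¬ (G.ends e).IsDiag) ∧ ∀ e f : E, G.ends e = G.ends f → e = f

/-- A `k`-separation: a partition of the edges into two parts, each of size at
least `k`, whose vertex sets share exactly `k` vertices. -/
def IsSep (G : Multigraph V E) (k : ℕ) (E1 E2 : Set E) : Prop :=
  E1 ∪ E2 = Set.univ ∧ Disjoint E1 E2 ∧ k ≤ E1.ncard ∧ k ≤ E2.ncard ∧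
    (G.verts E1 ∩ G.verts E2).ncard = k

/-- Tutte `k`-connectivity: connected and without `ℓ`-separations for
`1 ≤ ℓ < k`. -/
def TutteConnected (G : Multigraph V E) (k : ℕ) : Prop :=
  (∀ a b : V, G.Reach Set.univ Set.univ a b) ∧
  ∀ l : ℕ, 1 ≤ l → l < k → ¬ ∃ E1 E2 : Set E, G.IsSep l E1 E2

/-- A 2-separation with designated separating vertices `u` and `w`. -/
def IsTwoSep (G : Multigraph V E) (E1 E2 : Set E) (u w : V) : Prop :=
  E1 ∪ E2 = Set.univ ∧ Disjoint E1 E2 ∧ 2 ≤ E1.ncard ∧ 2 ≤ E2.ncard ∧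
    u ≠ w ∧ G.verts E1 ∩ G.verts E2 = {u, w}

/-- `v` is an articulation vertex of the subgraph with edge set `F`: after
removing `v` (and its incident edges), some two remaining vertices are
disconnected. -/
def ArticulationVertex (G : Multigraph V E) (F : Set E) (v : V) : Prop :=
  ∃ a b : V, a ≠ v ∧ b ≠ v ∧ ¬ G.Reach F {v}ᶜ a b

/-- The subgraph on the edge set `E1`, augmented by one new edge `{u, w}`. -/
def augment (G : Multigraph V E) (E1 : Set E) (u w : V) :
    Multigraph V (↥E1 ⊕ Unit) :=
  ⟨Sum.elim (fun e => G.ends e.1) (fun _ => s(u, w))⟩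

/-- The edge set `Q` of the intersection of the fundamental paths of all
edges in `Y`. -/
def Qedges (G : Multigraph V E) (T Y : Set E) : Set E :=
  ⋂ y ∈ Y, G.fundPath T y


lemma adj_symm {G : Multigraph V E} {F : Set E} {S : Set V} {a b : V}
    (h : G.Adj F S a b) : G.Adj F S b a := by
  obtain ⟨ha, hb, e, he, hends⟩ := h
  exact ⟨hb, ha, e, he, by rw [hends, Sym2.eq_swap]⟩

lemma reach_symm {G : Multigraph V E} {F : Set E} {S : Set V} {a b : V}
    (h : G.Reach F S a b) : G.Reach F S b a :=
  by
    haveI : Std.Symm (G.Adj F S) := ⟨fun _ _ h => adj_symm h⟩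
    exact Std.Symm.symm (r := Relation.ReflTransGen (G.Adj F S)) _ _ h

lemma reach_mono {G : Multigraph V E} {F F' : Set E} {S S' : Set V}
    (hF : F ⊆ F') (hS : S ⊆ S') {a b : V} (h : G.Reach F S a b) :
    G.Reach F' S' a b :=
  Relation.ReflTransGen.mono
    (show ∀ x y, G.Adj F S x y → G.Adj F' S' x y from
    fun _ _ h => ⟨hS h.1, hS h.2.1, h.2.2.choose, hF h.2.2.choose_spec.1,
      h.2.2.choose_spec.2⟩) _ _ h

lemma reach_trichotomy {G : Multigraph V E} {F : Set E} {S : Set V} {f : E} {p q a b : V}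
    (hf : G.ends f = s(p, q)) (h : G.Reach F S a b) :
    G.Reach (F \ {f}) S a b ∨
    (G.Reach (F \ {f}) S a p ∧ G.Reach (F \ {f}) S q b) ∨
    (G.Reach (F \ {f}) S a q ∧ G.Reach (F \ {f}) S p b) := by
  induction h with
  | refl => exact Or.inl .refl
  | @tail x y hax hstep ih =>
    obtain ⟨hx, hy, g, hg, hends⟩ := hstep
    by_cases hgf : g = f
    · subst hgf
      rw [hf, Sym2.eq_iff] at hends
      rcases hends with ⟨rfl, rfl⟩ | ⟨rfl, rfl⟩
      · -- x = p, y = q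
        rcases ih with h1 | ⟨h1, h2⟩ | ⟨h1, h2⟩
        · exact Or.inr (Or.inl ⟨h1, .refl⟩)
        · exact Or.inr (Or.inl ⟨h1, .refl⟩)
        · exact Or.inl h1
      · -- x = q, y = p
        rcases ih with h1 | ⟨h1, h2⟩ | ⟨h1, h2⟩
        · exact Or.inr (Or.inr ⟨h1, .refl⟩)
        · exact Or.inl h1
        · exact Or.inr (Or.inr ⟨h1, .refl⟩)
    · have step : G.Adj (F \ {f}) S x y := ⟨hx, hy, g, ⟨hg, hgf⟩, hends⟩
      rcases ih with h1 | ⟨h1, h2⟩ | ⟨h1, h2⟩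
      · exact Or.inl (h1.tail step)
      · exact Or.inr (Or.inl ⟨h1, h2.tail step⟩)
      · exact Or.inr (Or.inr ⟨h1, h2.tail step⟩)

lemma bridge_not_reach {G : Multigraph V E} {T : Set E} (hT : G.IsSpanningTree T)
    {f : E} (hf : f ∈ T) {p q : V} (hpq : G.ends f = s(p, q)) :
    ¬ G.Reach (T \ {f}) Set.univ p q := by
  intro hr
  obtain ⟨a, b, hab⟩ := hT.2 f hf
  rcases reach_trichotomy hpq (hT.1 a b) with h | ⟨h1, h2⟩ | ⟨h1, h2⟩
  · exact hab h
  · exact hab (h1.trans (hr.trans h2))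
  · exact hab (h1.trans ((reach_symm hr).trans h2))

lemma reach_pathEdges {G : Multigraph V E} {T : Set E} (hT : G.IsSpanningTree T)
    {u w : V} :
    ∀ n (F : Set E), F.Finite → F.ncard = n → F ⊆ T → G.Reach F Set.univ u w →
      G.Reach (G.pathEdges T u w) Set.univ u w := by
  intro n
  induction n using Nat.strong_induction_on with
  | _ n ih =>
    intro F hfin hcard hFT hr
    by_cases hFP : F ⊆ G.pathEdges T u w
    · exact reach_mono hFP subset_rfl hr
    · obtain ⟨f, hfF, hfP⟩ := Set.not_subset.mp hFP
      have hfT : f ∈ T := hFT hfF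
      have hRf : G.Reach (T \ {f}) Set.univ u w := by
        by_contra hc; exact hfP ⟨hfT, hc⟩
      obtain ⟨p, q, hpq⟩ : ∃ p q, G.ends f = s(p, q) :=
        Sym2.inductionOn (G.ends f) (fun x y => ⟨x, y, rfl⟩) (f := fun z => ∃ p q, z = s(p, q))
      have hcard' : (F \ {f}).ncard < n := hcard ▸ Set.ncard_diff_singleton_lt_of_mem hfF hfin
      rcases reach_trichotomy hpq hr with h | ⟨h1, h2⟩ | ⟨h1, h2⟩
      · exact ih _ hcard' _ hfin.diff rfl (Set.diff_subset.trans hFT) h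
      · exact absurd (((reach_symm (reach_mono (Set.diff_subset_diff_left hFT) subset_rfl h1)).trans
          hRf).trans (reach_symm (reach_mono (Set.diff_subset_diff_left hFT) subset_rfl h2)))
          (bridge_not_reach hT hfT hpq)
      · exact absurd ((reach_mono (Set.diff_subset_diff_left hFT) subset_rfl h2).trans
          ((reach_symm hRf).trans (reach_mono (Set.diff_subset_diff_left hFT) subset_rfl h1)))
          (bridge_not_reach hT hfT hpq)

lemma reach_restrict {G : Multigraph V E} {F : Set E} {S : Set V}
    (hS : ∀ f ∈ F, ∀ x ∈ G.ends f, x ∈ S) {a b : V}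
    (h : G.Reach F Set.univ a b) : G.Reach F S a b := by
  induction h with
  | refl => exact .refl
  | tail _ hstep ih =>
    obtain ⟨-, -, g, hg, hends⟩ := hstep
    exact ih.tail ⟨hS g hg _ (by rw [hends]; exact Sym2.mem_mk_left _ _),
      hS g hg _ (by rw [hends]; exact Sym2.mem_mk_right _ _), g, hg, hends⟩



end Multigraph

/-- Reduction along a 2-separation whose `E1`-side (containing the tree path
from `u` to `w`) is disjoint from `Y`: a vertex `v ∈ V(E2)` is `Y`-splittable
in `G` iff it is `Y`-splittable in the graph `G'` obtained from `E2` by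
adding a new edge `e = {u, w}` (with spanning tree `(T ∩ E2) ∪ {e}`). -/
theorem empty_propagation_tree {V E : Type} [Fintype V] [Fintype E]
    (G : Multigraph V E) (h2 : G.TutteConnected 2)
    (T : Set E) (hT : G.IsSpanningTree T)
    (Y : Set E) (hYT : ∀ y ∈ Y, y ∉ T) (hYne : Y.Nonempty)
    (E1 E2 : Set E) (u w : V) (hsep : G.IsTwoSep E1 E2 u w)
    (hpath : G.pathEdges T u w ⊆ E1) (hY1 : Y ∩ E1 = ∅)
    (v : V) (hv : v ∈ G.verts E2) :
    G.Splittable Y v ↔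
      (G.augment E2 u w).Splittable
        (Sum.inl '' {e : ↥E2 | (e : E) ∈ Y} : Set (↥E2 ⊕ Unit)) v := by
  classical
  obtain ⟨hunion, hdisj, hn1, hn2, huw, hvint⟩ := hsep
  have hmemU : ∀ e : E, e ∈ E1 ∪ E2 := fun e => hunion ▸ Set.mem_univ e
  have hYE2 : Y ⊆ E2 := by
    intro y hy
    rcases hmemU y with h | h
    · exfalso
      have hmem : y ∈ Y ∩ E1 := ⟨hy, h⟩
      rw [hY1] at hmem
      exact hmem
    · exact h
  have hvE1 : v ∈ G.verts E1 → v = u ∨ v = w := by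
    intro h
    have : v ∈ ({u, w} : Set V) := hvint ▸ ⟨h, hv⟩
    simpa using this
  have hpe1 : G.pathEdges T u w ⊆ Set.univ \ Y := by
    intro f hf
    refine ⟨trivial, fun hfY => ?_⟩
    have : f ∈ Y ∩ E1 := ⟨hfY, hpath hf⟩
    simp [hY1] at this
  have key : v ≠ u → v ≠ w → G.Reach (Set.univ \ Y) {v}ᶜ u w := by
    intro hvu hvw
    have h1 : G.Reach (G.pathEdges T u w) Set.univ u w :=
      Multigraph.reach_pathEdges hT T.ncard T (Set.toFinite T) rfl subset_rfl (hT.1 u w)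
    have h2 : G.Reach (G.pathEdges T u w) {v}ᶜ u w := by
      refine Multigraph.reach_restrict ?_ h1
      intro f hf x hx
      simp only [Set.mem_compl_iff, Set.mem_singleton_iff]
      intro hxv
      subst hxv
      rcases hvE1 ⟨f, hpath hf, hx⟩ with h | h
      · exact hvu h
      · exact hvw h
    exact Multigraph.reach_mono hpe1 subset_rfl h2
  constructor
  · rintro ⟨c, hcc, hcp⟩
    refine ⟨c, ?_, ?_⟩
    · intro a b hr
      induction hr with
      | refl => rfl
      | @tail x y hax hstep ih =>
        obtain ⟨hx, hy, j, hj, hends⟩ := hstep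
        refine ih.trans ?_
        cases j with
        | inl e =>
          have heY : (e : E) ∉ Y := fun h => hj.2 ⟨e, h, rfl⟩
          exact hcc x y (Relation.ReflTransGen.single ⟨hx, hy, (e : E), ⟨trivial, heY⟩, hends⟩)
        | inr i =>
          have hends' : s(u, w) = s(x, y) := hends
          rw [Sym2.eq_iff] at hends'
          rcases hends' with ⟨rfl, rfl⟩ | ⟨rfl, rfl⟩
          · exact hcc u w (key (Ne.symm (by simpa using hx)) (Ne.symm (by simpa using hy)))
          · exact (hcc u w (key (Ne.symm (by simpa using hy)) (Ne.symm (by simpa using hx)))).symm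
    · rintro y' ⟨e, heY, rfl⟩ a b hends ha hb
      exact hcp (e : E) heY a b hends ha hb
  · rintro ⟨c', hcc, hcp⟩
    set k : Bool := if v = u then c' w else c' u with hk
    have hinrY : (Sum.inr () : ↥E2 ⊕ Unit) ∉ (Sum.inl '' {e : ↥E2 | (e : E) ∈ Y}) := by
      rintro ⟨e, -, h⟩
      exact Sum.inl_ne_inr h
    have hinlY : ∀ (e : ↥E2), (e : E) ∉ Y →
        (Sum.inl e : ↥E2 ⊕ Unit) ∉ (Sum.inl '' {e : ↥E2 | (e : E) ∈ Y}) := by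
      rintro e he ⟨e', he', heq⟩
      cases Sum.inl.inj heq
      exact he he'
    have hcuw : v ≠ u → v ≠ w → c' u = c' w := fun h1 h2 =>
      hcc u w (Relation.ReflTransGen.single ⟨by simpa using h1.symm, by simpa using h2.symm,
        Sum.inr (), ⟨trivial, hinrY⟩, rfl⟩)
    have hkx : ∀ x, x ≠ v → x ∈ G.verts E1 →
        (if x ∈ G.verts E2 then c' x else k) = k := by
      intro x hxv hx1
      by_cases hx2 : x ∈ G.verts E2
      · rw [if_pos hx2]
        have hx : x ∈ ({u, w} : Set V) := hvint ▸ ⟨hx1, hx2⟩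
        rcases hx with rfl | hx
        · rw [hk, if_neg (Ne.symm hxv)]
        · rw [Set.mem_singleton_iff] at hx
          subst hx
          by_cases hvu : v = u
          · rw [hk, if_pos hvu]
          · rw [hk, if_neg hvu]
            exact (hcuw hvu (Ne.symm hxv)).symm
      · rw [if_neg hx2]
    refine ⟨fun a => if a ∈ G.verts E2 then c' a else k, ?_, ?_⟩
    · intro a b hr
      induction hr with
      | refl => rfl
      | @tail x y hax hstep ih =>
        obtain ⟨hx, hy, f, hf, hends⟩ := hstep
        refine ih.trans ?_
        show (if x ∈ G.verts E2 then c' x else k) = if y ∈ G.verts E2 then c' y else k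
        rcases hmemU f with hf1 | hf2
        · have hxv : x ≠ v := by simpa using hx
          have hyv : y ≠ v := by simpa using hy
          rw [hkx x hxv ⟨f, hf1, by rw [hends]; exact Sym2.mem_mk_left _ _⟩,
              hkx y hyv ⟨f, hf1, by rw [hends]; exact Sym2.mem_mk_right _ _⟩]
        · have hx2 : x ∈ G.verts E2 := ⟨f, hf2, by rw [hends]; exact Sym2.mem_mk_left _ _⟩
          have hy2 : y ∈ G.verts E2 := ⟨f, hf2, by rw [hends]; exact Sym2.mem_mk_right _ _⟩
          rw [if_pos hx2, if_pos hy2]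
          exact hcc x y (Relation.ReflTransGen.single ⟨hx, hy, Sum.inl ⟨f, hf2⟩,
            ⟨trivial, hinlY _ hf.2⟩, hends⟩)
    · intro y hy a b hends ha hb
      have hy2 : y ∈ E2 := hYE2 hy
      have ha2 : a ∈ G.verts E2 := ⟨y, hy2, by rw [hends]; exact Sym2.mem_mk_left _ _⟩
      have hb2 : b ∈ G.verts E2 := ⟨y, hy2, by rw [hends]; exact Sym2.mem_mk_right _ _⟩
      show (if a ∈ G.verts E2 then c' a else k) ≠ if b ∈ G.verts E2 then c' b else k
      rw [if_pos ha2, if_pos hb2]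
      exact hcp (Sum.inl ⟨y, hy2⟩) ⟨⟨y, hy2⟩, hy, rfl⟩ a b hends ha hb
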